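/- arXiv:math/0605173 — 3 statements merged into one kernel-verified Lean document; each statement's English description precedes it below -/
import Mathlib

section
/- Let τ be a partition of S_n satisfying the pre-convexity axiom (PC): if τ(π) = τ(π') and π'' is a linear extension of the partial order π ∩ π', then τ(π'') = τ(π). Then each class C of τ equals the set of all linear extensions of the poset P = ⋂_{π ∈ C} π. -/
/-!
A permutation `p : Perm α` of a linear order is read as a ranking: `x` precedes `y` iff
`p x ≤ p y`, so the listing `π` of the statement has ranking `π.symm`.

Let `r` be a linear extension of the intersection of a pre-convex class `C`, and pick `p ∈ C`
with the fewest pairs ordered differently by `p` and `r`. If `p ≠ r`, some `x, y` in adjacent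
positions of `p` are ordered oppositely by `r`. Since `r` extends `⋂ C`, some `q ∈ C` also puts
`y` before `x`, and swapping `x, y` in `p` gives a linear extension of `p ∩ q`, hence a member
of `C` closer to `r`.
-/

open Equiv Finset

theorem Equiv.swap_apply_le_swap_apply_of_covBy {α : Type*} [LinearOrder α] [DecidableEq α]
    {i j a b : α} (hij : i ⋖ j) (hab : a ≤ b) (hne : ¬(a = i ∧ b = j)) :
    swap i j a ≤ swap i j b := by
  have := hij.lt
  have hgap : ∀ c, i < c → j ≤ c := fun c hc => not_lt.mp fun hcj => hij.2 hc hcj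
  have hgap' : ∀ c, c < j → c ≤ i := fun c hc => not_lt.mp fun hic => hij.2 hic hc
  rw [swap_apply_def, swap_apply_def]
  split_ifs <;> grind

theorem Equiv.Perm.exists_covBy_apply_lt_of_ne_one {α : Type*} [LinearOrder α]
    [LocallyFiniteOrder α] [Finite α] {f : Perm α} (hf : f ≠ 1) :
    ∃ a b, a ⋖ b ∧ f b < f a := by
  contrapose! hf
  have hmono : StrictMono f := (strictMono_iff_forall_covBy f).2 fun a b hab =>
    (hf a b hab).lt_of_ne (f.injective.ne hab.ne)
  exact Equiv.ext fun a => le_antisymm hmono.apply_le hmono.le_apply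

namespace Ranking

variable {α : Type*} [LinearOrder α]

def IsPreconvex (C : Set (Perm α)) : Prop :=
  ∀ p ∈ C, ∀ q ∈ C, ∀ r : Perm α, (∀ x y, p x ≤ p y → q x ≤ q y → r x ≤ r y) → r ∈ C

theorem IsPreconvex.swap_mem {C : Set (Perm α)} (hC : IsPreconvex C) {p q : Perm α}
    (hp : p ∈ C) (hq : q ∈ C) {x y : α} (hxy : p x ⋖ p y) (hq' : q y < q x) :
    p.trans (swap (p x) (p y)) ∈ C :=
  hC p hp q hq _ fun a b hab hqab =>
    swap_apply_le_swap_apply_of_covBy hxy hab fun ⟨ha, hb⟩ => hqab.not_gt <| by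
      rwa [p.injective ha, p.injective hb]

variable [Fintype α]

def discordantPairs (p r : Perm α) : Finset (α × α) :=
  univ.filter fun xy => p xy.1 < p xy.2 ∧ r xy.2 < r xy.1

@[simp]
theorem mem_discordantPairs {p r : Perm α} {x y : α} :
    (x, y) ∈ discordantPairs p r ↔ p x < p y ∧ r y < r x := by
  simp [discordantPairs]

theorem discordantPairs_swap_ssubset {p r : Perm α} {x y : α} (hxy : p x ⋖ p y)
    (hr : r y < r x) :
    discordantPairs (p.trans (swap (p x) (p y))) r ⊂ discordantPairs p r := by
  refine Finset.ssubset_iff_subset_ne.2 ⟨fun ⟨a, b⟩ hab => ?_, fun h => ?_⟩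
  · simp only [mem_discordantPairs, trans_apply] at hab ⊢
    refine ⟨lt_of_not_ge fun hba => hab.1.not_ge ?_, hab.2⟩
    refine swap_apply_le_swap_apply_of_covBy hxy hba fun ⟨hb, ha⟩ => hab.2.not_gt ?_
    rwa [p.injective hb, p.injective ha]
  · have hmem : (x, y) ∈ discordantPairs p r := mem_discordantPairs.2 ⟨hxy.lt, hr⟩
    rw [← h] at hmem
    have hswapped := (mem_discordantPairs.1 hmem).1
    simp only [trans_apply, swap_apply_left, swap_apply_right] at hswapped
    exact hxy.lt.not_gt hswapped

variable [LocallyFiniteOrder α]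

theorem IsPreconvex.mem_of_forall_le {C : Set (Perm α)} (hC : IsPreconvex C) (hne : C.Nonempty)
    {r : Perm α} (hr : ∀ x y, (∀ p ∈ C, p x ≤ p y) → r x ≤ r y) : r ∈ C := by
  obtain ⟨p, hpC, hmin⟩ :=
    C.exists_min_image (fun p => #(discordantPairs p r)) C.toFinite hne
  by_contra hrC
  obtain ⟨a, b, hab, hba⟩ := Perm.exists_covBy_apply_lt_of_ne_one (f := p.symm.trans r)
    fun h => hrC <| by
      have : r = p := Equiv.ext fun x => by simpa using Equiv.ext_iff.1 h (p x)
      rwa [this]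
  set x := p.symm a
  set y := p.symm b
  obtain ⟨q, hqC, hqyx⟩ : ∃ q ∈ C, q y < q x := by
    by_contra! h
    exact hba.not_ge (by simpa using hr x y h)
  have hxy : p x ⋖ p y := by simpa [x, y] using hab
  exact (hmin _ (hC.swap_mem hpC hqC hxy hqyx)).not_gt
    (card_lt_card (discordantPairs_swap_ssubset hxy hba))

end Ranking

open Ranking in
/-- If `τ` is a partition of `S_n` (given by a statistic map `τ`) satisfying
the pre-convexity axiom (PC), then each class equals the set of all linear extensions of
the intersection of the total orders in that class. Permutations are listings
`Fin n ≃ Fin n`; `(x,y) ∈ π` means `π.symm x ≤ π.symm y`. -/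
theorem stmt2 (n : ℕ) (T : Type*) (τ : Equiv.Perm (Fin n) → T)
    (hPC : ∀ π π' π'' : Equiv.Perm (Fin n), τ π = τ π' →
      (∀ x y : Fin n, π.symm x ≤ π.symm y → π'.symm x ≤ π'.symm y → π''.symm x ≤ π''.symm y) →
      τ π'' = τ π)
    (π : Equiv.Perm (Fin n)) :
    ∀ π'' : Equiv.Perm (Fin n),
      τ π'' = τ π ↔
        (∀ x y : Fin n, (∀ σ : Equiv.Perm (Fin n), τ σ = τ π → σ.symm x ≤ σ.symm y) →
          π''.symm x ≤ π''.symm y) := by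
  intro π''
  set C : Set (Perm (Fin n)) := {p | τ p.symm = τ π}
  have hC : IsPreconvex C := fun p hp q hq r hr =>
    (hPC p.symm q.symm r.symm (hp.trans hq.symm) (by simpa using hr)).trans hp
  refine ⟨fun h x y hall => hall π'' h, fun hext => ?_⟩
  have hmem : π''.symm ∈ C := hC.mem_of_forall_le ⟨π.symm, by simp [C]⟩
    fun x y hall => hext x y fun σ hσ => hall σ.symm (by simpa [C] using hσ)
  simpa [C] using hmem
end

section
/- If w : 2^[n] → ℝ is submodular with w(∅) = 0, and δ = (δ_1,...,δ_n) is a permutation of [n], then the point x ∈ ℝ^n defined by x_{δ_k} = w({δ_1,...,δ_k}) − w({δ_1,...,δ_{k-1}}) lies in the polytope Q_w = {x : Σx_i = w([n]), Σ_{i∈I} x_i ≤ w(I) for all I}, and it maximizes u·x over Q_w for any u ∈ ℝ^n with u_{δ_1} > u_{δ_2} > ... > u_{δ_n}. -/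
/-- The greedy vector `x` with `x_{δ_k} = w({δ_1,…,δ_k}) − w({δ_1,…,δ_{k-1}})`
lies in `Q_w` and maximizes `u·x` over `Q_w` for any `u` decreasing along `δ`. -/
theorem stmt6 (n : ℕ) (w : Finset (Fin n) → ℝ) (h0 : w ∅ = 0)
    (hsub : ∀ I J : Finset (Fin n), w (I ∩ J) + w (I ∪ J) ≤ w I + w J)
    (δ : Equiv.Perm (Fin n)) (x : Fin n → ℝ)
    (hx : ∀ i : Fin n,
      x i = w ((Finset.univ.filter fun p : Fin n => (p : ℕ) ≤ (δ.symm i : ℕ)).image δ) -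
            w ((Finset.univ.filter fun p : Fin n => (p : ℕ) < (δ.symm i : ℕ)).image δ)) :
    ((∑ i, x i = w Finset.univ) ∧ ∀ I : Finset (Fin n), ∑ i ∈ I, x i ≤ w I) ∧
    ∀ u : Fin n → ℝ, (∀ k l : Fin n, k < l → u (δ l) < u (δ k)) →
      ∀ y : Fin n → ℝ,
        ((∑ i, y i = w Finset.univ) ∧ ∀ I : Finset (Fin n), ∑ i ∈ I, y i ≤ w I) →
        ∑ i, u i * y i ≤ ∑ i, u i * x i := by
  classical
  set A : ℕ → Finset (Fin n) := fun m =>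
    (Finset.univ.filter fun p : Fin n => (p : ℕ) < m).image δ with hA
  have hmem : ∀ (m : ℕ) (j : Fin n), j ∈ A m ↔ (δ.symm j : ℕ) < m := by
    intro m j
    simp only [hA, Finset.mem_image, Finset.mem_filter, Finset.mem_univ, true_and]
    constructor
    · rintro ⟨p, hp, rfl⟩; simpa using hp
    · intro h; exact ⟨δ.symm j, h, by simp⟩
  have hA0 : A 0 = ∅ := by
    ext j; simp [hmem]
  have hAuniv : ∀ m, n ≤ m → A m = Finset.univ := by
    intro m hm; ext j; simp only [Finset.mem_univ, iff_true, hmem]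
    exact lt_of_lt_of_le (δ.symm j).isLt hm
  have hAstep : ∀ (k : ℕ) (hk : k < n),
      A (k + 1) = insert (δ ⟨k, hk⟩) (A k) ∧ δ ⟨k, hk⟩ ∉ A k := by
    intro k hk
    constructor
    · ext j
      simp only [hmem, Finset.mem_insert, Nat.lt_succ_iff]
      constructor
      · intro h
        rcases eq_or_lt_of_le h with h | h
        · left
          have : δ.symm j = ⟨k, hk⟩ := Fin.ext h
          rw [← this]; simp
        · right; exact h
      · rintro (rfl | h)
        · simp
        · exact le_of_lt h
    · simp [hmem]
  have hxδ : ∀ p : Fin n, x (δ p) = w (A ((p : ℕ) + 1)) - w (A (p : ℕ)) := by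
    intro p
    rw [hx (δ p)]
    have h1 : (Finset.univ.filter fun q : Fin n => (q : ℕ) ≤ (δ.symm (δ p) : ℕ)) =
        Finset.univ.filter fun q : Fin n => (q : ℕ) < (p : ℕ) + 1 := by
      ext q; simp [Nat.lt_succ_iff]
    have h2 : (Finset.univ.filter fun q : Fin n => (q : ℕ) < (δ.symm (δ p) : ℕ)) =
        Finset.univ.filter fun q : Fin n => (q : ℕ) < (p : ℕ) := by
      ext q; simp
    rw [h1, h2]
  have hX : ∀ m : ℕ, ∑ i ∈ A m, x i = w (A m) := by
    intro m
    induction m with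
    | zero => rw [hA0]; simp [h0]
    | succ k ih =>
      by_cases hk : k < n
      · obtain ⟨hins, hnot⟩ := hAstep k hk
        rw [hins, Finset.sum_insert hnot, ih]
        have := hxδ ⟨k, hk⟩
        simp only at this
        rw [this, ← hins]
        ring
      · have h1 : A (k + 1) = A k := by
          rw [hAuniv k (le_of_not_gt hk), hAuniv (k + 1) (le_trans (le_of_not_gt hk) (Nat.le_succ k))]
        rw [h1, ih]
  have hsum1 : ∑ i, x i = w Finset.univ := by
    have := hX n
    rw [hAuniv n le_rfl] at this
    exact this
  have hIneq : ∀ I : Finset (Fin n), ∑ i ∈ I, x i ≤ w I := by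
    intro I
    induction I using Finset.strongInduction with
    | _ I ih =>
      rcases I.eq_empty_or_nonempty with rfl | hI
      · simp [h0]
      · have hne : (I.image δ.symm).Nonempty := hI.image _
        set k : Fin n := (I.image δ.symm).max' hne with hkdef
        have hkmem : k ∈ I.image δ.symm := Finset.max'_mem _ hne
        obtain ⟨j0, hj0, hj0k⟩ := Finset.mem_image.mp hkmem
        have hkI : δ k ∈ I := by rw [← hj0k]; simpa using hj0
        have hle : ∀ j ∈ I, (δ.symm j : ℕ) ≤ (k : ℕ) := by
          intro j hj
          have : δ.symm j ≤ k := Finset.le_max' _ _ (Finset.mem_image_of_mem _ hj)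
          exact this
        have h1 : I ∩ A (k : ℕ) = I.erase (δ k) := by
          ext j
          simp only [Finset.mem_inter, hmem, Finset.mem_erase]
          constructor
          · rintro ⟨hjI, hjlt⟩
            refine ⟨?_, hjI⟩
            intro hjk
            rw [hjk] at hjlt; simp at hjlt
          · rintro ⟨hne', hjI⟩
            refine ⟨hjI, lt_of_le_of_ne (hle j hjI) ?_⟩
            intro h
            exact hne' (by rw [← Fin.ext h]; simp)
        have h2 : I ∪ A (k : ℕ) = A ((k : ℕ) + 1) := by
          ext j
          simp only [Finset.mem_union, hmem, Nat.lt_succ_iff]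
          constructor
          · rintro (hjI | hlt)
            · exact hle j hjI
            · exact le_of_lt hlt
          · intro h
            rcases eq_or_lt_of_le h with h | h
            · left
              have : δ.symm j = k := Fin.ext h
              rw [← this] at hkI; simpa using hkI
            · right; exact h
        have hsubm := hsub I (A (k : ℕ))
        rw [h1, h2] at hsubm
        have hx' := hxδ k
        have ihe := ih (I.erase (δ k)) (Finset.erase_ssubset hkI)
        have hsum : ∑ i ∈ I, x i = x (δ k) + ∑ i ∈ I.erase (δ k), x i :=
          (Finset.add_sum_erase _ _ hkI).symm
        rw [hsum, hx']
        linarith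
  refine ⟨⟨hsum1, hIneq⟩, ?_⟩
  rintro u hu y ⟨hy1, hy2⟩
  set g : ℕ → ℝ := fun m => if h : m < n then u (δ ⟨m, h⟩) else 0 with hg
  have habel : ∀ (f Z : ℕ → ℝ) (m : ℕ),
      ∑ k ∈ Finset.range m, f k * (Z (k + 1) - Z k) =
        ∑ k ∈ Finset.range m, (f k - f (k + 1)) * Z (k + 1) + f m * Z m - f 0 * Z 0 := by
    intro f Z m
    induction m with
    | zero => simp
    | succ m ih =>
      rw [Finset.sum_range_succ, Finset.sum_range_succ, ih]
      ring
  have hrew : ∀ z : Fin n → ℝ,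
      ∑ i, u i * z i =
        ∑ k ∈ Finset.range n, (g k - g (k + 1)) * (∑ i ∈ A (k + 1), z i) := by
    intro z
    set F : ℕ → ℝ := fun m =>
      g m * (if h : m < n then z (δ ⟨m, h⟩) else 0) with hF
    have e1 : ∑ i, u i * z i = ∑ p : Fin n, u (δ p) * z (δ p) :=
      (Equiv.sum_comp δ (fun i => u i * z i)).symm
    have e2 : ∑ p : Fin n, u (δ p) * z (δ p) = ∑ p : Fin n, F (p : ℕ) := by
      apply Finset.sum_congr rfl
      intro p _
      simp [hF, hg, p.isLt]
    have e3 : ∑ p : Fin n, F (p : ℕ) = ∑ k ∈ Finset.range n, F k :=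
      Fin.sum_univ_eq_sum_range F n
    have e4 : ∀ k ∈ Finset.range n,
        F k = g k * ((∑ i ∈ A (k + 1), z i) - ∑ i ∈ A k, z i) := by
      intro k hk
      have hkn : k < n := Finset.mem_range.mp hk
      obtain ⟨hins, hnot⟩ := hAstep k hkn
      rw [hins, Finset.sum_insert hnot]
      simp [hF, hkn]
    rw [e1, e2, e3, Finset.sum_congr rfl e4,
      habel g (fun m => ∑ i ∈ A m, z i) n]
    have hgn : g n = 0 := by simp [hg]
    rw [hA0, hgn]
    simp
  rw [hrew y, hrew x]
  apply Finset.sum_le_sum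
  intro k hk
  have hkn : k < n := Finset.mem_range.mp hk
  by_cases hk1 : k + 1 < n
  · have hnonneg : 0 ≤ g k - g (k + 1) := by
      have := hu ⟨k, hkn⟩ ⟨k + 1, hk1⟩ (by simp [Fin.lt_def])
      simp only [hg, dif_pos hkn, dif_pos hk1]
      linarith
    have hle : ∑ i ∈ A (k + 1), y i ≤ ∑ i ∈ A (k + 1), x i := by
      rw [hX (k + 1)]
      exact hy2 (A (k + 1))
    exact mul_le_mul_of_nonneg_left hle hnonneg
  · have hkeq : k + 1 = n := by omega
    have hYeq : ∑ i ∈ A (k + 1), y i = ∑ i ∈ A (k + 1), x i := by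
      rw [hkeq, hAuniv n le_rfl, hy1, hsum1]
    rw [hYeq]
end

section
/- Let M be a semi-graphoid over [4] containing exactly the statements (2 ⟂ 3 | {1,4}), (1 ⟂ 4 | {2,3}), (1 ⟂ 2 | ∅), (3 ⟂ 4 | ∅) and their symmetric versions. Then M satisfies the semi-graphoid axiom, but there is no submodular function w : 2^[4] → ℝ such that M = {(i ⟂ j | K) : w(K∪{i}) + w(K∪{j}) = w(K) + w(K∪{i,j})}. -/
/-- The semi-graphoid of the paper (elements `1,2,3,4` encoded as `0,1,2,3` in `Fin 4`):
the CI statements `2⟂3|{1,4}`, `1⟂4|{2,3}`, `1⟂2|∅`, `3⟂4|∅` and their symmetric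
versions. -/
def paperM : Set (Fin 4 × Fin 4 × Finset (Fin 4)) :=
  {(1, 2, {0, 3}), (2, 1, {0, 3}), (0, 3, {1, 2}), (3, 0, {1, 2}),
   (0, 1, ∅), (1, 0, ∅), (2, 3, ∅), (3, 2, ∅)}

set_option synthInstance.maxSize 10000
set_option maxHeartbeats 1000000

lemma paperM_mem_iff (p : Fin 4 × Fin 4 × Finset (Fin 4)) :
    p ∈ paperM ↔ (p = (1, 2, {0, 3}) ∨ p = (2, 1, {0, 3}) ∨ p = (0, 3, {1, 2}) ∨
      p = (3, 0, {1, 2}) ∨ p = (0, 1, ∅) ∨ p = (1, 0, ∅) ∨ p = (2, 3, ∅) ∨ p = (3, 2, ∅)) := by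
  simp [paperM, Set.mem_insert_iff]

/-- `paperM` satisfies the semi-graphoid axiom, but there is no submodular
function `w : 2^[4] → ℝ` whose associated structural model (the CI statements `(i ⟂ j | K)`
where `w(K∪{i}) + w(K∪{j}) = w(K) + w(K∪{i,j})`) equals `paperM`. -/
theorem stmt16 :
    (∀ i j l : Fin 4, ∀ K : Finset (Fin 4),
      (i, j, insert l K) ∈ paperM → (i, l, K) ∈ paperM →
      (i, j, K) ∈ paperM ∧ (i, l, insert j K) ∈ paperM) ∧
    ¬ ∃ w : Finset (Fin 4) → ℝ,
        (∀ I J : Finset (Fin 4), w (I ∩ J) + w (I ∪ J) ≤ w I + w J) ∧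
        paperM = {p : Fin 4 × Fin 4 × Finset (Fin 4) |
          p.1 ≠ p.2.1 ∧ p.1 ∉ p.2.2 ∧ p.2.1 ∉ p.2.2 ∧
          w (insert p.1 p.2.2) + w (insert p.2.1 p.2.2) =
            w p.2.2 + w (insert p.1 (insert p.2.1 p.2.2))} := by
  constructor
  · simp only [paperM_mem_iff]
    decide
  · rintro ⟨w, hsub, hM⟩
    -- the four equalities coming from membership in paperM
    have mem1 : ((1 : Fin 4), (2 : Fin 4), ({0, 3} : Finset (Fin 4))) ∈ paperM := by
      rw [paperM_mem_iff]; left; rfl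
    have mem2 : ((0 : Fin 4), (3 : Fin 4), ({1, 2} : Finset (Fin 4))) ∈ paperM := by
      rw [paperM_mem_iff]; right; right; left; rfl
    have mem3 : ((0 : Fin 4), (1 : Fin 4), (∅ : Finset (Fin 4))) ∈ paperM := by
      rw [paperM_mem_iff]; right; right; right; right; left; rfl
    have mem4 : ((2 : Fin 4), (3 : Fin 4), (∅ : Finset (Fin 4))) ∈ paperM := by
      rw [paperM_mem_iff]; right; right; right; right; right; right; left; rfl
    rw [hM] at mem1 mem2 mem3 mem4
    have E1 := mem1.2.2.2
    have E2 := mem2.2.2.2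
    have E3 := mem3.2.2.2
    have E4 := mem4.2.2.2
    simp only at E1 E2 E3 E4
    -- normalize the Finsets appearing
    have s1 : insert (1 : Fin 4) ({0, 3} : Finset (Fin 4)) = {0, 1, 3} := by decide
    have s2 : insert (2 : Fin 4) ({0, 3} : Finset (Fin 4)) = {0, 2, 3} := by decide
    have s3 : insert (1 : Fin 4) ({0, 2, 3} : Finset (Fin 4)) = {0, 1, 2, 3} := by decide
    have s4 : insert (0 : Fin 4) ({1, 2} : Finset (Fin 4)) = {0, 1, 2} := by decide
    have s5 : insert (3 : Fin 4) ({1, 2} : Finset (Fin 4)) = {1, 2, 3} := by decide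
    have s6 : insert (0 : Fin 4) ({1, 2, 3} : Finset (Fin 4)) = {0, 1, 2, 3} := by decide
    have s7 : insert (0 : Fin 4) (∅ : Finset (Fin 4)) = {0} := by decide
    have s8 : insert (1 : Fin 4) (∅ : Finset (Fin 4)) = {1} := by decide
    have s9 : insert (0 : Fin 4) ({1} : Finset (Fin 4)) = {0, 1} := by decide
    have s10 : insert (2 : Fin 4) (∅ : Finset (Fin 4)) = {2} := by decide
    have s11 : insert (3 : Fin 4) (∅ : Finset (Fin 4)) = {3} := by decide
    have s12 : insert (2 : Fin 4) ({3} : Finset (Fin 4)) = {2, 3} := by decide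
    rw [s1, s2] at E1; rw [s3] at E1
    rw [s4, s5] at E2; rw [s6] at E2
    rw [s7, s8] at E3; rw [s9] at E3
    rw [s10, s11] at E4; rw [s12] at E4
    -- submodular inequalities
    have A := hsub {0} {3}
    have hA1 : ({0} : Finset (Fin 4)) ∩ {3} = ∅ := by decide
    have hA2 : ({0} : Finset (Fin 4)) ∪ {3} = {0, 3} := by decide
    rw [hA1, hA2] at A
    have B := hsub {1} {2}
    have hB1 : ({1} : Finset (Fin 4)) ∩ {2} = ∅ := by decide
    have hB2 : ({1} : Finset (Fin 4)) ∪ {2} = {1, 2} := by decide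
    rw [hB1, hB2] at B
    have C := hsub {0, 1, 2} {0, 1, 3}
    have hC1 : ({0, 1, 2} : Finset (Fin 4)) ∩ {0, 1, 3} = {0, 1} := by decide
    have hC2 : ({0, 1, 2} : Finset (Fin 4)) ∪ {0, 1, 3} = {0, 1, 2, 3} := by decide
    rw [hC1, hC2] at C
    have D := hsub {0, 2, 3} {1, 2, 3}
    have hD1 : ({0, 2, 3} : Finset (Fin 4)) ∩ {1, 2, 3} = {2, 3} := by decide
    have hD2 : ({0, 2, 3} : Finset (Fin 4)) ∪ {1, 2, 3} = {0, 1, 2, 3} := by decide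
    rw [hD1, hD2] at D
    -- deduce the equality for (0 ⟂ 3 | ∅)
    have key : w ({0} : Finset (Fin 4)) + w {3} = w ∅ + w {0, 3} := by linarith
    -- hence (0, 3, ∅) is in the structural model
    have memBad : ((0 : Fin 4), (3 : Fin 4), (∅ : Finset (Fin 4))) ∈
        {p : Fin 4 × Fin 4 × Finset (Fin 4) |
          p.1 ≠ p.2.1 ∧ p.1 ∉ p.2.2 ∧ p.2.1 ∉ p.2.2 ∧
          w (insert p.1 p.2.2) + w (insert p.2.1 p.2.2) =
            w p.2.2 + w (insert p.1 (insert p.2.1 p.2.2))} := by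
      refine ⟨by decide, by decide, by decide, ?_⟩
      simp only
      rw [s7, s11]
      rw [show insert (0 : Fin 4) ({3} : Finset (Fin 4)) = {0, 3} from by decide]
      exact key
    rw [← hM] at memBad
    rw [paperM_mem_iff] at memBad
    simp at memBad
    exact absurd memBad (by decide)
end
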